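/- For the cycle C_n with n ≥ 3, the strong metric dimension of C_n equals ⌈n/2⌉. -/

import Mathlib

open SimpleGraph

/-- One step of the zero forcing color-change rule: add every white vertex that is
the unique white neighbor of some black vertex. -/
def zfStep {V : Type*} (G : SimpleGraph V) (B : Set V) : Set V :=
  B ∪ {w | ∃ u ∈ B, G.Adj u w ∧ ∀ x, G.Adj u x → x ∉ B → x = w}

/-- `S` is a zero forcing set if iterating the color-change rule blackens all vertices. -/
def IsZeroForcingSet {V : Type*} (G : SimpleGraph V) (S : Set V) : Prop :=
  ∃ n : ℕ, (zfStep G)^[n] S = Set.univ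

/-- The zero forcing number: minimum cardinality of a zero forcing set. -/
noncomputable def zeroForcingNumber {V : Type*} (G : SimpleGraph V) : ℕ :=
  sInf {n | ∃ S : Set V, S.ncard = n ∧ IsZeroForcingSet G S}

/-- A (finite) graph is a path graph: nonempty, connected, acyclic, max degree ≤ 2. -/
def IsPathGraph {V : Type*} (G : SimpleGraph V) : Prop :=
  Nonempty V ∧ G.Connected ∧ G.IsAcyclic ∧ ∀ v : V, (G.neighborSet v).ncard ≤ 2

/-- The path cover number: minimum number of vertex-disjoint induced paths covering `V`. -/
noncomputable def pathCoverNumber {V : Type*} (G : SimpleGraph V) : ℕ :=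
  sInf {n | ∃ P : Finset (Set V), P.card = n ∧
    (∀ S ∈ P, IsPathGraph (G.induce S)) ∧
    (P : Set (Set V)).PairwiseDisjoint id ∧ ⋃₀ (P : Set (Set V)) = Set.univ}

/-- `u` lies on an `x`–`v` geodesic. -/
def LiesBetween {V : Type*} (G : SimpleGraph V) (x u v : V) : Prop :=
  G.dist x u + G.dist u v = G.dist x v

/-- `x` strongly resolves the pair `u, v`. -/
def StronglyResolves {V : Type*} (G : SimpleGraph V) (x u v : V) : Prop :=
  LiesBetween G x u v ∨ LiesBetween G x v u

/-- `W` is a strong resolving set of `G`. -/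
def IsStrongResolvingSet {V : Type*} (G : SimpleGraph V) (W : Set V) : Prop :=
  ∀ u v : V, u ≠ v → ∃ x ∈ W, StronglyResolves G x u v

/-- The strong metric dimension: minimum cardinality of a strong resolving set. -/
noncomputable def sdim {V : Type*} (G : SimpleGraph V) : ℕ :=
  sInf {n | ∃ W : Set V, W.ncard = n ∧ IsStrongResolvingSet G W}

/-- A leaf is a vertex of degree one. -/
def IsLeaf {V : Type*} (G : SimpleGraph V) (v : V) : Prop :=
  (G.neighborSet v).ncard = 1

/-- `σ(G)`: the number of leaves of `G`. -/
noncomputable def leafCount {V : Type*} (G : SimpleGraph V) : ℕ :=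
  {v | IsLeaf G v}.ncard

/-!
On `C_n` the distance is the length of the shorter arc. Two antipodal vertices `u`, `u + ⌊n/2⌋`
realise the diameter, so the only vertices strongly resolving them are `u` and `u + ⌊n/2⌋`
themselves; a strong resolving set `W` therefore meets every antipodal pair, and since
`W ∪ (W - ⌊n/2⌋)` covers `C_n`, `n ≤ 2 |W|`. Conversely the vertices `0, …, ⌈n/2⌉ - 1` form a
strong resolving set: a pair with an endpoint among them is resolved by that endpoint, and a pair
in the upper half is resolved by `0`, which lies on the continuation of the short arc between them.
-/

namespace Fin

variable {n : ℕ}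

/-- The length of the shorter arc from `0` to `k` on a cycle of length `n`. -/
def cycNorm (k : Fin n) : ℕ := min k.val (-k).val

lemma ncard_setOf_val_lt {m : ℕ} (hm : m ≤ n) : {x : Fin n | x.val < m}.ncard = m := by
  rw [← range_castLE hm, Set.ncard_range_of_injective (castLE_injective hm), Nat.card_fin]

variable [NeZero n]

@[simp]
lemma cycNorm_zero : cycNorm (0 : Fin n) = 0 := by simp [cycNorm]

lemma cycNorm_add_le (a b : Fin n) : cycNorm (a + b) ≤ cycNorm a + cycNorm b := by
  simp only [cycNorm, val_neg, Fin.ext_iff, val_zero, val_add_eq_ite]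
  split_ifs <;> omega

lemma cycNorm_le_half (k : Fin n) : cycNorm k ≤ n / 2 := by
  simp only [cycNorm, val_neg, Fin.ext_iff, val_zero]
  split_ifs <;> omega

lemma cycNorm_eq_val (k : Fin n) (hk : k.val ≤ n / 2) : cycNorm k = k.val := by
  simp only [cycNorm, val_neg, Fin.ext_iff, val_zero]
  split_ifs <;> omega

lemma val_sub_add_val_sub {u v : Fin n} (h : u ≠ v) : (u - v).val + (v - u).val = n := by
  rw [← neg_sub, val_neg, if_neg (sub_ne_zero.2 h.symm)]
  have := (v - u).isLt
  omega

end Fin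

namespace SimpleGraph

variable {V : Type*} {G : SimpleGraph V}

lemma Walk.apply_le_apply_add_length {f : V → ℕ} (hf : ∀ a b, G.Adj a b → f a ≤ f b + 1)
    {u v : V} (p : G.Walk u v) : f u ≤ f v + p.length := by
  induction p with
  | nil => simp
  | cons hab _ ih =>
    have := hf _ _ hab
    rw [Walk.length_cons]
    omega

lemma Reachable.apply_le_apply_add_dist {f : V → ℕ} (hf : ∀ a b, G.Adj a b → f a ≤ f b + 1)
    {u v : V} (h : G.Reachable u v) : f u ≤ f v + G.dist u v := by
  obtain ⟨p, hp⟩ := h.exists_walk_length_eq_dist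
  exact hp ▸ p.apply_le_apply_add_length hf

section Cycle

variable {n : ℕ} [NeZero n]

lemma cycleGraph_dist_add_one_le (u : Fin n) : (cycleGraph n).dist u (u + 1) ≤ 1 := by
  rcases eq_or_ne (u + 1) u with h | h
  · simp [h]
  have hn : n ≠ 1 := by rintro rfl; exact h (Subsingleton.elim _ _)
  refine (dist_eq_one_iff_adj.2 (cycleGraph_adj'.2 (Or.inr ?_))).le
  rw [add_sub_cancel_left, Fin.val_one', Nat.one_mod_eq_one.2 hn]

lemma cycleGraph_dist_add_ofNat_le (u : Fin n) (m : ℕ) :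
    (cycleGraph n).dist u (u + Fin.ofNat n m) ≤ m := by
  induction m with
  | zero => simp
  | succ m ih =>
    calc (cycleGraph n).dist u (u + Fin.ofNat n (m + 1))
        ≤ (cycleGraph n).dist u (u + Fin.ofNat n m)
          + (cycleGraph n).dist (u + Fin.ofNat n m) (u + Fin.ofNat n m + 1) := by
          have hsucc : Fin.ofNat n (m + 1) = Fin.ofNat n m + 1 := by
            ext; simp [Fin.val_add, Nat.add_mod]
          rw [hsucc, ← add_assoc]
          exact (cycleGraph_preconnected _ _).dist_triangle_left _
      _ ≤ m + 1 := add_le_add ih (cycleGraph_dist_add_one_le _)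

lemma cycleGraph_dist_le_val_sub (u v : Fin n) : (cycleGraph n).dist u v ≤ (v - u).val := by
  simpa using cycleGraph_dist_add_ofNat_le u (v - u).val

lemma cycleGraph_dist (u v : Fin n) : (cycleGraph n).dist u v = Fin.cycNorm (v - u) := by
  refine le_antisymm (le_min (cycleGraph_dist_le_val_sub u v) ?_) ?_
  · rw [neg_sub, dist_comm]
    exact cycleGraph_dist_le_val_sub v u
  have hf : ∀ a b, (cycleGraph n).Adj a b → Fin.cycNorm (v - a) ≤ Fin.cycNorm (v - b) + 1 := by
    intro a b hab
    have hba : Fin.cycNorm (b - a) ≤ 1 := by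
      rw [cycleGraph_adj'] at hab
      rcases hab with h | h
      · exact (min_le_right _ _).trans (by rw [neg_sub, h])
      · exact (min_le_left _ _).trans h.le
    calc Fin.cycNorm (v - a) = Fin.cycNorm ((v - b) + (b - a)) := by rw [sub_add_sub_cancel]
      _ ≤ Fin.cycNorm (v - b) + 1 := (Fin.cycNorm_add_le _ _).trans (by omega)
  simpa using (cycleGraph_preconnected u v).apply_le_apply_add_dist hf

end Cycle

end SimpleGraph

section StrongResolving

variable {V : Type*} {G : SimpleGraph V}

lemma liesBetween_comm {x u v : V} : LiesBetween G x u v ↔ LiesBetween G v u x := by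
  simp only [LiesBetween, G.dist_comm (u := x), G.dist_comm (v := u), add_comm]

lemma stronglyResolves_comm {x u v : V} : StronglyResolves G x u v ↔ StronglyResolves G x v u :=
  or_comm

lemma stronglyResolves_left (u v : V) : StronglyResolves G u u v :=
  Or.inl (by simp [LiesBetween])

lemma stronglyResolves_right (u v : V) : StronglyResolves G v u v :=
  stronglyResolves_comm.2 (stronglyResolves_left v u)

lemma isStrongResolvingSet_univ (G : SimpleGraph V) : IsStrongResolvingSet G Set.univ :=
  fun u v _ => ⟨u, Set.mem_univ u, stronglyResolves_left u v⟩

lemma sdim_le_ncard {W : Set V} (hW : IsStrongResolvingSet G W) : sdim G ≤ W.ncard :=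
  Nat.sInf_le ⟨W, rfl, hW⟩

lemma exists_isStrongResolvingSet_ncard_eq_sdim (G : SimpleGraph V) :
    ∃ W : Set V, W.ncard = sdim G ∧ IsStrongResolvingSet G W :=
  Nat.sInf_mem (s := {n | ∃ W : Set V, W.ncard = n ∧ IsStrongResolvingSet G W})
    ⟨_, Set.univ, rfl, isStrongResolvingSet_univ G⟩

lemma StronglyResolves.eq_or_eq_of_forall_dist_le (hG : G.Preconnected) {x u v : V}
    (hx : StronglyResolves G x u v) (hmax : ∀ a b, G.dist a b ≤ G.dist u v) : x = u ∨ x = v := by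
  rcases hx with h | h
  · have := hmax x v
    exact Or.inl (((hG x u).dist_eq_zero_iff).1 (by unfold LiesBetween at h; omega))
  · have := hmax x u
    have := G.dist_comm (u := u) (v := v)
    exact Or.inr (((hG x v).dist_eq_zero_iff).1 (by unfold LiesBetween at h; omega))

end StrongResolving

section Cycle

variable {n : ℕ}

lemma liesBetween_cycleGraph [NeZero n] {x u v : Fin n} (h : (u - x).val + (v - u).val ≤ n / 2) :
    LiesBetween (cycleGraph n) x u v := by
  have hvx : (v - x).val = (v - u).val + (u - x).val := by
    rw [← sub_add_sub_cancel v u x, Fin.val_add_eq_of_add_lt (by omega)]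
  rw [LiesBetween, cycleGraph_dist, cycleGraph_dist, cycleGraph_dist,
    Fin.cycNorm_eq_val _ (by omega), Fin.cycNorm_eq_val _ (by omega),
    Fin.cycNorm_eq_val _ (by omega), hvx, add_comm]

lemma isStrongResolvingSet_cycleGraph_setOf_val_lt [NeZero n] :
    IsStrongResolvingSet (cycleGraph n) {x | x.val < (n + 1) / 2} := by
  intro u v huv
  wlog hshort : (v - u).val ≤ n / 2 generalizing u v
  · have hsum := Fin.val_sub_add_val_sub huv
    obtain ⟨x, hx, hres⟩ := this v u huv.symm (by omega)
    exact ⟨x, hx, stronglyResolves_comm.1 hres⟩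
  by_cases hu : u.val < (n + 1) / 2
  · exact ⟨u, hu, stronglyResolves_left u v⟩
  by_cases hv : v.val < (n + 1) / 2
  · exact ⟨v, hv, stronglyResolves_right u v⟩
  -- both endpoints lie in the upper half, so the short arc `u → v` continues on to `0`
  refine ⟨0, by simp; omega, Or.inr (liesBetween_comm.2 (liesBetween_cycleGraph ?_))⟩
  have hv0 : v ≠ 0 := by rintro rfl; simp at hv; omega
  have hle : u ≤ v := by
    by_contra hlt
    have := Fin.coe_sub_iff_lt.2 (not_le.1 hlt)
    omega
  rw [Fin.sub_val_of_le hle, zero_sub, Fin.val_neg, if_neg hv0]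
  omega

lemma IsStrongResolvingSet.mem_or_mem_of_val_sub_eq_half (hn : 2 ≤ n) {W : Set (Fin n)}
    (hW : IsStrongResolvingSet (cycleGraph n) W) {u v : Fin n} (huv : (v - u).val = n / 2) :
    u ∈ W ∨ v ∈ W := by
  have : NeZero n := ⟨by omega⟩
  have hne : u ≠ v := by rintro rfl; simp at huv; omega
  obtain ⟨x, hxW, hx⟩ := hW u v hne
  have hmax : ∀ a b, (cycleGraph n).dist a b ≤ (cycleGraph n).dist u v := fun a b => by
    rw [cycleGraph_dist, cycleGraph_dist, Fin.cycNorm_eq_val _ huv.le, huv]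
    exact Fin.cycNorm_le_half _
  rcases hx.eq_or_eq_of_forall_dist_le cycleGraph_preconnected hmax with rfl | rfl
  exacts [Or.inl hxW, Or.inr hxW]

lemma IsStrongResolvingSet.le_two_mul_ncard_cycleGraph (hn : 2 ≤ n) {W : Set (Fin n)}
    (hW : IsStrongResolvingSet (cycleGraph n) W) : n ≤ 2 * W.ncard := by
  have : NeZero n := ⟨by omega⟩
  let k : Fin n := ⟨n / 2, by omega⟩
  have hcover : Set.univ ⊆ W ∪ (· - k) '' W := fun u _ =>
    (hW.mem_or_mem_of_val_sub_eq_half hn (v := u + k) (by simp [k])).imp id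
      fun hv => ⟨u + k, hv, add_sub_cancel_right u k⟩
  have himage : ((· - k) '' W).ncard ≤ W.ncard := Set.ncard_image_le
  calc n = (Set.univ : Set (Fin n)).ncard := by simp
    _ ≤ (W ∪ (· - k) '' W).ncard := Set.ncard_le_ncard hcover
    _ ≤ W.ncard + ((· - k) '' W).ncard := Set.ncard_union_le _ _
    _ ≤ 2 * W.ncard := by omega

end Cycle

/-- For `n ≥ 3`, the strong metric dimension of the cycle `C_n` is `⌈n/2⌉`. -/
theorem sdim_cycleGraph (n : ℕ) (h3 : 3 ≤ n) :
    sdim (cycleGraph n) = (n + 1) / 2 := by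
  have : NeZero n := ⟨by omega⟩
  obtain ⟨W, hWcard, hW⟩ := exists_isStrongResolvingSet_ncard_eq_sdim (cycleGraph n)
  refine le_antisymm ?_ ?_
  · calc sdim (cycleGraph n) ≤ {x : Fin n | x.val < (n + 1) / 2}.ncard :=
          sdim_le_ncard isStrongResolvingSet_cycleGraph_setOf_val_lt
      _ = (n + 1) / 2 := Fin.ncard_setOf_val_lt (by omega)
  · have := hW.le_two_mul_ncard_cycleGraph (by omega)
    omega
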